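/- For every integer n ≥ 0, every real N > 0 and every real X: H_n(X) = (N^{n/2}/(N)_{n/2}) · ∫_0^∞ H_n^N(X√N/√c) · γ_{N+(n+1)/2}(c) dc, where (N)_{n/2} := Γ(N+n/2)/Γ(N). -/

import Mathlib

open Finset Polynomial MeasureTheory

/-- The (physicists') Hermite polynomial `H_n(X)`. -/
noncomputable def Hpoly (n : ℕ) (X : ℝ) : ℝ :=
  (n.factorial : ℝ) *
    ∑ k ∈ Finset.range (n / 2 + 1),
      (-1) ^ k / ((k.factorial : ℝ) * ((n - 2 * k).factorial : ℝ)) * (2 * X) ^ (n - 2 * k)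

/-- The relativistic Hermite polynomial `H_n^N(X)` (real parameter `N > 0`). -/
noncomputable def RH (n : ℕ) (N X : ℝ) : ℝ :=
  ((ascPochhammer ℝ n).eval (2 * N) / (2 * Real.sqrt N) ^ n) *
    ∑ k ∈ Finset.range (n / 2 + 1),
      (-1) ^ k / (ascPochhammer ℝ k).eval (N + 1 / 2) *
        ((n.factorial : ℝ) / (((n - 2 * k).factorial : ℝ) * (k.factorial : ℝ))) *
        (2 * X / Real.sqrt N) ^ (n - 2 * k)

/-- The Gamma density with shape parameter `a`, `γ_a(b) = e^(-b) b^(a-1) / Γ(a)` on `(0,∞)`. -/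
noncomputable def gammaPdf (a b : ℝ) : ℝ :=
  Real.exp (-b) * b ^ (a - 1) / Real.Gamma a

/-! Substituting `X √N / √c` into `H_n^N` turns its `k`-th term into a multiple of
`c^{-(n-2k)/2}`, and against `γ_{N+(n+1)/2}` this negative half-moment equals
`Γ(N + 1/2 + k) / Γ(N + (n+1)/2) = (N + 1/2)_k Γ(N + 1/2) / Γ(N + (n+1)/2)`. The Pochhammer
factor cancels the one in `H_n^N`, leaving a constant multiple of `H_n`; Legendre's duplication
formula, applied at `N` and at `N + n/2`, shows that the constant is `(N)_{n/2} / N^{n/2}`. -/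

open Real Set

lemma Gamma_add_nat_eq_ascPochhammer_mul {x : ℝ} (hx : 0 < x) (k : ℕ) :
    Gamma (x + k) = (ascPochhammer ℝ k).eval x * Gamma x := by
  induction k with
  | zero => simp
  | succ k ih =>
    rw [Nat.cast_succ, ← add_assoc, Gamma_add_one (by positivity), ih, ascPochhammer_succ_eval]
    ring

lemma ascPochhammer_eval_two_mul_mul_Gamma {x : ℝ} (hx : 0 < x) (n : ℕ) :
    (ascPochhammer ℝ n).eval (2 * x) * (Gamma x * Gamma (x + 1 / 2)) =
      2 ^ n * (Gamma (x + n / 2) * Gamma (x + n / 2 + 1 / 2)) := by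
  have hshift : 2 * (x + n / 2) = 2 * x + n := by ring
  have hpow : (2 : ℝ) ^ (1 - 2 * x) = 2 ^ n * 2 ^ (1 - (2 * x + n)) := by
    rw [← rpow_natCast, ← rpow_add two_pos]
    ring_nf
  rw [Gamma_mul_Gamma_add_half, Gamma_mul_Gamma_add_half, hshift,
    Gamma_add_nat_eq_ascPochhammer_mul (by positivity), hpow]
  ring

lemma inv_sqrt_pow_mul_gammaPdf (a : ℝ) {c : ℝ} (hc : 0 < c) (m : ℕ) :
    (√c ^ m)⁻¹ * gammaPdf a c = (Gamma a)⁻¹ * (exp (-c) * c ^ (a - m / 2 - 1)) := by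
  have hsqrt : √c ^ m = c ^ ((m : ℝ) / 2) := by
    rw [sqrt_eq_rpow, ← rpow_mul_natCast hc.le]
    ring_nf
  have hrpow : c ^ (a - m / 2 - 1) = c ^ (a - 1) / c ^ ((m : ℝ) / 2) := by
    rw [← rpow_sub hc]
    ring_nf
  rw [hsqrt, hrpow, gammaPdf]
  ring

lemma integrableOn_inv_sqrt_pow_mul_gammaPdf {a : ℝ} {m : ℕ} (h : (m : ℝ) / 2 < a) :
    IntegrableOn (fun c ↦ (√c ^ m)⁻¹ * gammaPdf a c) (Ioi 0) := by
  have hint : IntegrableOn (fun c ↦ (Gamma a)⁻¹ * (exp (-c) * c ^ (a - m / 2 - 1))) (Ioi 0) :=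
    (GammaIntegral_convergent (by linarith : 0 < a - m / 2)).const_mul _
  exact hint.congr_fun (fun c hc ↦ (inv_sqrt_pow_mul_gammaPdf a hc m).symm) measurableSet_Ioi

lemma integral_inv_sqrt_pow_mul_gammaPdf {a : ℝ} {m : ℕ} (h : (m : ℝ) / 2 < a) :
    ∫ c in Ioi 0, (√c ^ m)⁻¹ * gammaPdf a c = Gamma (a - m / 2) / Gamma a := by
  rw [setIntegral_congr_fun measurableSet_Ioi fun c hc ↦ inv_sqrt_pow_mul_gammaPdf a hc m,
    integral_const_mul, Gamma_eq_integral (s := a - m / 2) (by linarith), inv_mul_eq_div]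

lemma RH_mul_sqrt_div_sqrt (n : ℕ) {N : ℝ} (hN : 0 < N) (X : ℝ) {c : ℝ} (hc : 0 < c) :
    RH n N (X * √N / √c) = (ascPochhammer ℝ n).eval (2 * N) / (2 * √N) ^ n *
      ∑ k ∈ range (n / 2 + 1), (-1) ^ k / (ascPochhammer ℝ k).eval (N + 1 / 2) *
        (n.factorial / ((n - 2 * k).factorial * k.factorial)) *
          ((2 * X) ^ (n - 2 * k) * (√c ^ (n - 2 * k))⁻¹) := by
  have harg : 2 * (X * √N / √c) / √N = 2 * X / √c := by
    field_simp [(sqrt_pos.mpr hN).ne', (sqrt_pos.mpr hc).ne']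
  simp only [RH, harg, div_pow, div_eq_mul_inv ((2 * X) ^ _)]

lemma integral_RH_mul_gammaPdf (n : ℕ) {N : ℝ} (hN : 0 < N) (X : ℝ) :
    ∫ c in Ioi 0, RH n N (X * √N / √c) * gammaPdf (N + (n + 1) / 2) c =
      (ascPochhammer ℝ n).eval (2 * N) / (2 * √N) ^ n *
        (Gamma (N + 1 / 2) / Gamma (N + (n + 1) / 2)) * Hpoly n X := by
  set a := N + ((n : ℝ) + 1) / 2
  set coeff : ℕ → ℝ := fun k ↦ (ascPochhammer ℝ n).eval (2 * N) / (2 * √N) ^ n *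
    ((-1) ^ k / (ascPochhammer ℝ k).eval (N + 1 / 2) *
      (n.factorial / ((n - 2 * k).factorial * k.factorial)) * (2 * X) ^ (n - 2 * k))
  have hexpand : ∀ c ∈ Ioi (0 : ℝ), RH n N (X * √N / √c) * gammaPdf a c =
      ∑ k ∈ range (n / 2 + 1), coeff k * ((√c ^ (n - 2 * k))⁻¹ * gammaPdf a c) := fun c hc ↦ by
    rw [RH_mul_sqrt_div_sqrt n hN X hc, mul_sum, sum_mul]
    exact sum_congr rfl fun k _ ↦ by ring
  have hcast : ∀ k ∈ range (n / 2 + 1), ((n - 2 * k : ℕ) : ℝ) = n - 2 * k := fun k hk ↦ by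
    have := mem_range.mp hk
    rw [Nat.cast_sub (by omega)]
    push_cast
    ring
  have hshift : ∀ k ∈ range (n / 2 + 1), a - ((n - 2 * k : ℕ) : ℝ) / 2 = N + 1 / 2 + k :=
    fun k hk ↦ by rw [hcast k hk]; ring
  have hlt : ∀ k ∈ range (n / 2 + 1), ((n - 2 * k : ℕ) : ℝ) / 2 < a := fun k hk ↦
    sub_pos.mp (hshift k hk ▸ by positivity)
  have hmoment : ∀ k ∈ range (n / 2 + 1), ∫ c in Ioi 0, (√c ^ (n - 2 * k))⁻¹ * gammaPdf a c =
      (ascPochhammer ℝ k).eval (N + 1 / 2) * Gamma (N + 1 / 2) / Gamma a := fun k hk ↦ by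
    rw [integral_inv_sqrt_pow_mul_gammaPdf (hlt k hk), hshift k hk,
      Gamma_add_nat_eq_ascPochhammer_mul (by positivity)]
  have hintegrable : ∀ k ∈ range (n / 2 + 1),
      IntegrableOn (fun c ↦ coeff k * ((√c ^ (n - 2 * k))⁻¹ * gammaPdf a c)) (Ioi 0) :=
    fun k hk ↦ (integrableOn_inv_sqrt_pow_mul_gammaPdf (hlt k hk)).const_mul _
  rw [setIntegral_congr_fun measurableSet_Ioi hexpand, integral_finsetSum _ hintegrable,
    Hpoly, mul_sum, mul_sum]
  refine sum_congr rfl fun k hk ↦ ?_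
  rw [integral_const_mul, hmoment k hk]
  simp only [coeff]
  have hpoch : (ascPochhammer ℝ k).eval (N + 1 / 2) ≠ 0 :=
    (ascPochhammer_pos k _ (by positivity)).ne'
  -- opaque, so that `field_simp` does not rewrite `N + 1 / 2` inside it
  generalize (ascPochhammer ℝ k).eval (N + 1 / 2) = p at hpoch ⊢
  field_simp

lemma subordination_normalization_eq_one {N : ℝ} (hN : 0 < N) (n : ℕ) :
    N ^ ((n : ℝ) / 2) / (Gamma (N + n / 2) / Gamma N) *
      ((ascPochhammer ℝ n).eval (2 * N) / (2 * √N) ^ n *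
        (Gamma (N + 1 / 2) / Gamma (N + (n + 1) / 2))) = 1 := by
  have hpow : (2 * √N) ^ n = 2 ^ n * N ^ ((n : ℝ) / 2) := by
    rw [mul_pow, sqrt_eq_rpow, ← rpow_mul_natCast hN.le]
    ring_nf
  have hhalf : N + ((n : ℝ) + 1) / 2 = N + n / 2 + 1 / 2 := by ring
  have hdup := ascPochhammer_eval_two_mul_mul_Gamma hN n
  have hN' : 0 < N + n / 2 := by positivity
  rw [hpow, hhalf]
  calc _ = (ascPochhammer ℝ n).eval (2 * N) * (Gamma N * Gamma (N + 1 / 2)) /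
        (2 ^ n * (Gamma (N + n / 2) * Gamma (N + n / 2 + 1 / 2))) := by
        have := (Gamma_pos_of_pos hN).ne'
        have := (rpow_pos_of_pos hN ((n : ℝ) / 2)).ne'
        have := (Gamma_pos_of_pos hN').ne'
        have := (Gamma_pos_of_pos (by positivity : 0 < N + n / 2 + 1 / 2)).ne'
        field_simp
    _ = 1 := by
        rw [hdup, div_self]
        have := Gamma_pos_of_pos hN'
        have := Gamma_pos_of_pos (by positivity : 0 < N + n / 2 + 1 / 2)
        positivity

/-- Subordination: `H_n(X) = (N^(n/2)/(N)_(n/2)) ∫_0^∞ H_n^N(X√N/√c) γ_(N+(n+1)/2)(c) dc`,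
where `(N)_(n/2) = Γ(N+n/2)/Γ(N)`. -/
theorem hermite_subordination_RH (n : ℕ) (N : ℝ) (hN : 0 < N) (X : ℝ) :
    Hpoly n X =
      N ^ ((n : ℝ) / 2) / (Real.Gamma (N + (n : ℝ) / 2) / Real.Gamma N) *
        ∫ c in Set.Ioi (0 : ℝ),
          RH n N (X * Real.sqrt N / Real.sqrt c) * gammaPdf (N + ((n : ℝ) + 1) / 2) c := by
  rw [integral_RH_mul_gammaPdf n hN X, ← mul_assoc, subordination_normalization_eq_one hN n,
    one_mul]
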